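/- Let n ≥ 1 and λ_1, …, λ_n > 0. Let S = (S_1,…,S_n) be a random vector of nonnegative real random variables; let N = (N_1,…,N_n) with values in ℕ^n be such that the joint law of (S, N) is ν ⊗ κ, where ν is the law of S on [0,∞)^n and, for each s, κ(s) is the product over p = 1,…,n of Poisson distributions on ℕ with means λ_p s_p; and let (Θ_{p,k})_{1≤p≤n, k≥1} be an i.i.d. family of nonnegative real random variables with LST π(ω) = E[e^{−ω Θ_{1,1}}], the whole family being independent of the pair (S, N). Define C = ∑_{p=1}^n S_p + ∑_{p=1}^n ∑_{k=1}^{N_p} Θ_{p,k}. Then for every ω ≥ 0: E[ e^{−ωC} ] = E[ exp( −∑_{p=1}^n ( ω + λ_p (1 − π(ω)) ) S_p ) ]. -/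

import Mathlib

open MeasureTheory ProbabilityTheory

noncomputable def poissonPdf (r : ℝ) (k : ℕ) : ℝ :=
  Real.exp (-r) * r ^ k / (Nat.factorial k)

/-! Condition on the event `N = f`. There `e^{-ωC}` factorises as `e^{-ω ∑ S_p}` times
`∏_p ∏_{k < f_p} e^{-ω Θ_{p,k}}`; since `Θ` is i.i.d. and independent of `(S, N)`, the expectation
on this event is `E[e^{-ω ∑ S_p}; N = f] · π(ω)^{∑ f_p}`, and by the joint law the first factor
is `∫ e^{-ω ∑ s_p} ∏_p Poisson(λ_p s_p)(f_p) dν(s)`. Summing over `f`, the Poisson generating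
function `∑_k Poisson(r)(k) z^k = e^{-r(1-z)}` turns the integrand into
`e^{-∑_p (ω + λ_p (1 - π(ω))) s_p}`, and `ν` is the law of `S`. The computation is carried out in
`ℝ≥0∞`, where sums and integrals commute without integrability side conditions. -/

open scoped ENNReal
open Finset

theorem hasSum_poissonPdf_mul_pow (r q : ℝ) :
    HasSum (fun k => poissonPdf r k * q ^ k) (Real.exp (-(r * (1 - q)))) := by
  have h := (NormedSpace.expSeries_div_hasSum_exp (r * q)).mul_left (Real.exp (-r))
  rw [← Real.exp_eq_exp_ℝ, ← Real.exp_add] at h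
  have hterm : (fun k => poissonPdf r k * q ^ k)
      = fun k => Real.exp (-r) * ((r * q) ^ k / (Nat.factorial k)) := by
    ext k
    rw [poissonPdf, mul_pow]
    ring
  rwa [hterm, show -(r * (1 - q)) = -r + r * q by ring]

theorem ENNReal.tsum_fin_pi_prod {β : Type*} :
    ∀ {n : ℕ} (g : Fin n → β → ℝ≥0∞), ∑' f : Fin n → β, ∏ p, g p (f p) = ∏ p, ∑' b, g p b
  | 0, g => by simp
  | n + 1, g => by
    rw [← (Fin.consEquiv fun _ => β).tsum_eq, ENNReal.tsum_prod', Fin.prod_univ_succ,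
      ← ENNReal.tsum_fin_pi_prod, ← ENNReal.tsum_mul_right]
    simp [Fin.consEquiv, Fin.prod_univ_succ, ENNReal.tsum_mul_left]

theorem ENNReal.tsum_pi_prod {ι β : Type*} [Fintype ι] (g : ι → β → ℝ≥0∞) :
    ∑' f : ι → β, ∏ i, g i (f i) = ∏ i, ∑' b, g i b := by
  let e := (Fintype.equivFin ι).symm
  rw [← (e.arrowCongr (Equiv.refl β)).tsum_eq, ← e.prod_comp]
  simpa [← e.prod_comp] using ENNReal.tsum_fin_pi_prod fun p => g (e p)

theorem tsum_ofReal_poissonPdf_mul_pow {r q : ℝ} (hr : 0 ≤ r) (hq : 0 ≤ q) :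
    ∑' k, ENNReal.ofReal (poissonPdf r k) * ENNReal.ofReal q ^ k
      = ENNReal.ofReal (Real.exp (-(r * (1 - q)))) := by
  have hpdf : ∀ k, 0 ≤ poissonPdf r k := fun k => by unfold poissonPdf; positivity
  simp_rw [← ENNReal.ofReal_pow hq, ← ENNReal.ofReal_mul (hpdf _)]
  rw [← ENNReal.ofReal_tsum_of_nonneg (fun k => mul_nonneg (hpdf k) (pow_nonneg hq k))
    (hasSum_poissonPdf_mul_pow r q).summable, (hasSum_poissonPdf_mul_pow r q).tsum_eq]

theorem tsum_ofReal_prod_poissonPdf_mul_pow {ι : Type*} [Fintype ι] {r : ι → ℝ}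
    (hr : ∀ i, 0 ≤ r i) {q : ℝ} (hq : 0 ≤ q) :
    ∑' f : ι → ℕ, ENNReal.ofReal (∏ i, poissonPdf (r i) (f i)) * ENNReal.ofReal q ^ ∑ i, f i
      = ENNReal.ofReal (Real.exp (-∑ i, r i * (1 - q))) := by
  have hpdf : ∀ i k, 0 ≤ poissonPdf (r i) k := fun i k => by
    have := hr i
    unfold poissonPdf
    positivity
  simp_rw [ENNReal.ofReal_prod_of_nonneg fun i _ => hpdf i _, ← prod_pow_eq_pow_sum,
    ← prod_mul_distrib]
  rw [ENNReal.tsum_pi_prod fun i k => ENNReal.ofReal (poissonPdf (r i) k) * ENNReal.ofReal q ^ k,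
    ← sum_neg_distrib, Real.exp_sum,
    ENNReal.ofReal_prod_of_nonneg fun i _ => (Real.exp_pos _).le]
  exact prod_congr rfl fun i _ => tsum_ofReal_poissonPdf_mul_pow (hr i) hq

theorem tsum_ofReal_prod_poissonPdf_mul_exp_mul_pow {ι : Type*} [Fintype ι] {lam s : ι → ℝ}
    (h : ∀ i, 0 ≤ lam i * s i) {q : ℝ} (hq : 0 ≤ q) (ω : ℝ) :
    ∑' f : ι → ℕ, ENNReal.ofReal (∏ i, poissonPdf (lam i * s i) (f i))
        * ENNReal.ofReal (Real.exp (-ω * ∑ i, s i)) * ENNReal.ofReal q ^ ∑ i, f i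
      = ENNReal.ofReal (Real.exp (-∑ i, (ω + lam i * (1 - q)) * s i)) := by
  simp_rw [mul_right_comm _ (ENNReal.ofReal (Real.exp _)), ENNReal.tsum_mul_right]
  rw [tsum_ofReal_prod_poissonPdf_mul_pow h hq, ← ENNReal.ofReal_mul (Real.exp_pos _).le,
    ← Real.exp_add]
  simp only [neg_mul, mul_sum, ← sum_neg_distrib, ← sum_add_distrib]
  congr 2
  exact sum_congr rfl fun i _ => by ring

theorem ofReal_exp_neg_mul_add_sum_sum {ι κ : Type*} (ω a : ℝ) (T : Finset ι)
    (t : ι → Finset κ) (θ : ι → κ → ℝ) :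
    ENNReal.ofReal (Real.exp (-ω * (a + ∑ i ∈ T, ∑ j ∈ t i, θ i j)))
      = ENNReal.ofReal (Real.exp (-ω * a))
        * ∏ i ∈ T, ∏ j ∈ t i, ENNReal.ofReal (Real.exp (-ω * θ i j)) := by
  simp only [mul_add, mul_sum, Real.exp_add, Real.exp_sum,
    ENNReal.ofReal_mul (Real.exp_pos _).le,
    ENNReal.ofReal_prod_of_nonneg fun _ _ => (Real.exp_pos _).le,
    ENNReal.ofReal_prod_of_nonneg fun _ _ => prod_nonneg fun _ _ => (Real.exp_pos _).le]

section Measure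

variable {Ω : Type*} [MeasurableSpace Ω] {μ : Measure Ω}

theorem measurable_sum_range_of_measurable_index {M : Type*} [AddCommMonoid M]
    [MeasurableSpace M] [MeasurableAdd₂ M] {N : Ω → ℕ} (hN : Measurable N) {X : ℕ → Ω → M}
    (hX : ∀ k, Measurable (X k)) : Measurable fun x => ∑ k ∈ range (N x), X k x := by
  have hpair : Measurable fun q : Ω × ℕ => ∑ k ∈ range q.2, X k q.1 :=
    measurable_from_prod_countable_left fun m => Finset.measurable_sum (range m) fun k _ => hX k
  exact hpair.comp (measurable_id.prodMk hN)

theorem lintegral_eq_tsum_setLIntegral_fiber {β : Type*} [MeasurableSpace β] [Countable β]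
    [MeasurableSingletonClass β] {N : Ω → β} (hN : Measurable N) (F : Ω → ℝ≥0∞) :
    ∫⁻ x, F x ∂μ = ∑' b, ∫⁻ x in N ⁻¹' {b}, F x ∂μ := by
  rw [← lintegral_iUnion (fun b => hN (measurableSet_singleton b)) (pairwise_disjoint_fiber N),
    show ⋃ b, N ⁻¹' {b} = Set.univ by ext; simp, setLIntegral_univ]

theorem setLIntegral_preimage_mul_of_indepFun {β γ : Type*} [MeasurableSpace β]
    [MeasurableSpace γ] {Y : Ω → β} {Z : Ω → γ} (hY : Measurable Y) (hZ : Measurable Z)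
    (h : IndepFun Y Z μ) {B : Set β} (hB : MeasurableSet B) {a : β → ℝ≥0∞} {b : γ → ℝ≥0∞}
    (ha : Measurable a) (hb : Measurable b) :
    ∫⁻ x in Y ⁻¹' B, a (Y x) * b (Z x) ∂μ = (∫⁻ x in Y ⁻¹' B, a (Y x) ∂μ) * ∫⁻ x, b (Z x) ∂μ := by
  have hY_B := hY hB
  calc ∫⁻ x in Y ⁻¹' B, a (Y x) * b (Z x) ∂μ
      = ∫⁻ x, (B.indicator a ∘ Y) x * (b ∘ Z) x ∂μ := by
        rw [← lintegral_indicator hY_B]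
        refine lintegral_congr fun x => ?_
        by_cases hx : Y x ∈ B <;> simp [Set.indicator, hx]
    _ = (∫⁻ x, (B.indicator a ∘ Y) x ∂μ) * ∫⁻ x, (b ∘ Z) x ∂μ :=
        lintegral_mul_eq_lintegral_mul_lintegral_of_indepFun''
          ((ha.indicator hB).comp hY).aemeasurable (hb.comp hZ).aemeasurable
          (h.comp (ha.indicator hB) hb)
    _ = _ := by
        rw [← lintegral_indicator hY_B]
        rfl

theorem map_restrict_eq_withDensity {α : Type*} [MeasurableSpace α] {S : Ω → α}
    (hS : Measurable S) {E : Set Ω} {ν : Measure α} {ρ : α → ℝ≥0∞}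
    (h : ∀ A, MeasurableSet A → μ (S ⁻¹' A ∩ E) = ∫⁻ s in A, ρ s ∂ν) :
    (μ.restrict E).map S = ν.withDensity ρ := by
  ext A hA
  rw [Measure.map_apply hS hA, Measure.restrict_apply (hS hA), withDensity_apply _ hA, h A hA]

theorem ofReal_integral_exp_neg_mul [IsFiniteMeasure μ] {X : Ω → ℝ} (hX : Measurable X)
    (h0 : 0 ≤ᵐ[μ] X) {ω : ℝ} (hω : 0 ≤ ω) :
    ENNReal.ofReal (∫ x, Real.exp (-ω * X x) ∂μ)
      = ∫⁻ x, ENNReal.ofReal (Real.exp (-ω * X x)) ∂μ := by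
  have hbound : ∀ᵐ x ∂μ, ‖Real.exp (-ω * X x)‖ ≤ 1 := h0.mono fun x (hx : 0 ≤ X x) => by
    rw [Real.norm_of_nonneg (Real.exp_pos _).le, Real.exp_le_one_iff, neg_mul, neg_nonpos]
    exact mul_nonneg hω hx
  exact ofReal_integral_eq_lintegral_ofReal
    ((integrable_const 1).mono' (by fun_prop) hbound)
    (ae_of_all _ fun x => (Real.exp_pos _).le)

theorem lintegral_prod_prod_eq_pow_of_iIndepFun {ι κ : Type*} {W : ι → κ → Ω → ℝ≥0∞}
    (hW : iIndepFun (fun ij : ι × κ => W ij.1 ij.2) μ) (hm : ∀ i j, Measurable (W i j))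
    {P : ℝ≥0∞} (hP : ∀ i j, ∫⁻ x, W i j x ∂μ = P) (T : Finset ι) (t : ι → Finset κ) :
    ∫⁻ x, ∏ i ∈ T, ∏ j ∈ t i, W i j x ∂μ = P ^ ∑ i ∈ T, #(t i) := by
  have hreindex : ∀ g : ι × κ → ℝ≥0∞, ∏ i ∈ T, ∏ j ∈ t i, g (i, j)
      = ∏ ij ∈ (T.sigma t).map (Equiv.sigmaEquivProd ι κ).toEmbedding, g ij := fun g => by
    rw [prod_map, prod_sigma]
    rfl
  rw [lintegral_congr fun x => hreindex fun ij => W ij.1 ij.2 x,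
    lintegral_prod_eq_prod_lintegral_of_indepFun _ _ hW fun ij => hm ij.1 ij.2]
  simp [hP, card_sigma]

theorem setLIntegral_fiber_exp_neg_mul_add_sum_sum {ι : Type*} [Fintype ι] {ν : Measure (ι → ℝ)}
    {ρ : (ι → ℕ) → (ι → ℝ) → ℝ≥0∞}
    (hρ : ∀ f, Measurable (ρ f)) {S : Ω → ι → ℝ} {N : Ω → ι → ℕ} (hS : Measurable S)
    (hN : Measurable N)
    (hjoint : ∀ A, MeasurableSet A → ∀ f, μ (S ⁻¹' A ∩ {x | N x = f}) = ∫⁻ s in A, ρ f s ∂ν)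
    {Θ : ι → ℕ → Ω → ℝ} (hΘmeas : ∀ p k, Measurable (Θ p k))
    (hiid : iIndepFun (fun pk : ι × ℕ => Θ pk.1 pk.2) μ)
    (hindep : IndepFun (fun x => (S x, N x)) (fun x (pk : ι × ℕ) => Θ pk.1 pk.2 x) μ)
    {ω : ℝ} {P : ℝ≥0∞} (hP : ∀ p k, ∫⁻ x, ENNReal.ofReal (Real.exp (-ω * Θ p k x)) ∂μ = P)
    (f : ι → ℕ) :
    ∫⁻ x in N ⁻¹' {f},
        ENNReal.ofReal (Real.exp (-ω * (∑ p, S x p + ∑ p, ∑ k ∈ range (N x p), Θ p k x))) ∂μ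
      = ∫⁻ s, ρ f s * ENNReal.ofReal (Real.exp (-ω * ∑ p, s p)) * P ^ ∑ p, f p ∂ν := by
  set E : ℝ → ℝ≥0∞ := fun y => ENNReal.ofReal (Real.exp (-ω * y)) with hE
  have hEm : Measurable E := by fun_prop
  have hN_f : MeasurableSet (N ⁻¹' {f}) := hN (measurableSet_singleton f)
  calc _ = ∫⁻ x in N ⁻¹' {f}, E (∑ p, S x p) * ∏ p, ∏ k ∈ range (f p), E (Θ p k x) ∂μ :=
        setLIntegral_congr_fun hN_f fun x (hx : N x = f) => by
          simp only [hE]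
          rw [ofReal_exp_neg_mul_add_sum_sum, hx]
    _ = (∫⁻ x in N ⁻¹' {f}, E (∑ p, S x p) ∂μ)
          * ∫⁻ x, ∏ p, ∏ k ∈ range (f p), E (Θ p k x) ∂μ :=
        setLIntegral_preimage_mul_of_indepFun (hS.prodMk hN) (by fun_prop) hindep
          (measurable_snd (measurableSet_singleton f)) (a := fun q => E (∑ p, q.1 p))
          (b := fun θ => ∏ p, ∏ k ∈ range (f p), E (θ (p, k))) (by fun_prop) (by fun_prop)
    _ = _ := by
        rw [← lintegral_map (f := fun s => E (∑ p, s p)) (by fun_prop) hS,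
          map_restrict_eq_withDensity (E := N ⁻¹' {f}) hS (hjoint · · f),
          lintegral_withDensity_eq_lintegral_mul _ (hρ f) (by fun_prop),
          lintegral_prod_prod_eq_pow_of_iIndepFun (W := fun p k x => E (Θ p k x))
            (hiid.comp (fun _ => E) fun _ => hEm) (fun p k => hEm.comp (hΘmeas p k)) hP,
          ← lintegral_mul_const _ ((hρ f).mul (by fun_prop))]
        simp only [card_range]
        rfl

end Measure

theorem stmt7_general {Ω : Type*} [MeasurableSpace Ω] (μ : Measure Ω) [IsProbabilityMeasure μ]
    (n : ℕ) (hn : 0 < n) (lam : Fin n → ℝ) (hlam : ∀ p, 0 < lam p)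
    (ν : Measure (Fin n → ℝ))
    (hνsupp : ∀ᵐ s ∂ν, ∀ p, 0 ≤ s p)
    (S : Ω → Fin n → ℝ) (N : Ω → Fin n → ℕ) (hS : Measurable S) (hN : Measurable N)
    (hSlaw : Measure.map S μ = ν)
    (hjoint : ∀ A : Set (Fin n → ℝ), MeasurableSet A → ∀ f : Fin n → ℕ,
      μ (S ⁻¹' A ∩ {x | N x = f})
        = ∫⁻ s in A, ENNReal.ofReal (∏ p, poissonPdf (lam p * s p) (f p)) ∂ν)
    (Θ : Fin n → ℕ → Ω → ℝ) (hΘmeas : ∀ p k, Measurable (Θ p k))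
    (hΘ0 : ∀ p k, ∀ᵐ x ∂μ, 0 ≤ Θ p k x)
    (hiid : iIndepFun (fun pk : Fin n × ℕ => Θ pk.1 pk.2) μ)
    (hident : ∀ p k, Measure.map (Θ p k) μ = Measure.map (Θ ⟨0, hn⟩ 0) μ)
    (hindep : IndepFun (fun x => (S x, N x))
      (fun x (pk : Fin n × ℕ) => Θ pk.1 pk.2 x) μ)
    (π : ℝ → ℝ) (hπ : ∀ ω : ℝ, π ω = ∫ x, Real.exp (-ω * Θ ⟨0, hn⟩ 0 x) ∂μ)
    (C : Ω → ℝ)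
    (hC : ∀ x, C x = ∑ p, S x p + ∑ p, ∑ k ∈ Finset.range (N x p), Θ p k x)
    (ω : ℝ) (hω : 0 ≤ ω) :
    ∫ x, Real.exp (-ω * C x) ∂μ
      = ∫ x, Real.exp (-∑ p, (ω + lam p * (1 - π ω)) * S x p) ∂μ := by
  obtain rfl : C = _ := funext hC
  have hπ_nonneg : 0 ≤ π ω := hπ ω ▸ integral_nonneg fun _ => (Real.exp_pos _).le
  have hLST : ∀ p k, ∫⁻ x, ENNReal.ofReal (Real.exp (-ω * Θ p k x)) ∂μ = ENNReal.ofReal (π ω) :=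
    fun p k => by
      rw [hπ, ofReal_integral_exp_neg_mul (hΘmeas _ _) (hΘ0 _ _) hω]
      exact ((IdentDistrib.mk (hΘmeas p k).aemeasurable (hΘmeas _ _).aemeasurable (hident p k)).comp
        (u := fun y => ENNReal.ofReal (Real.exp (-ω * y))) (by fun_prop)).lintegral_eq
  set ρ : (Fin n → ℕ) → (Fin n → ℝ) → ℝ≥0∞ :=
    fun f s => ENNReal.ofReal (∏ p, poissonPdf (lam p * s p) (f p))
  have hρ : ∀ f, Measurable (ρ f) := fun f => by
    unfold ρ poissonPdf
    fun_prop
  have hlintegral : ∫⁻ x, ENNReal.ofReal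
        (Real.exp (-ω * (∑ p, S x p + ∑ p, ∑ k ∈ range (N x p), Θ p k x))) ∂μ
      = ∫⁻ s, ENNReal.ofReal (Real.exp (-∑ p, (ω + lam p * (1 - π ω)) * s p)) ∂ν := by
    rw [lintegral_eq_tsum_setLIntegral_fiber hN, tsum_congr
      (setLIntegral_fiber_exp_neg_mul_add_sum_sum hρ hS hN hjoint hΘmeas hiid hindep hLST),
      ← lintegral_tsum fun f => by fun_prop]
    exact lintegral_congr_ae (hνsupp.mono fun s hs =>
      tsum_ofReal_prod_poissonPdf_mul_exp_mul_pow (fun p => mul_nonneg (hlam p).le (hs p))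
        hπ_nonneg ω)
  have hCm : Measurable fun x => ∑ p, S x p + ∑ p, ∑ k ∈ range (N x p), Θ p k x :=
    (Finset.measurable_sum _ fun p _ => by fun_prop).add (Finset.measurable_sum _ fun p _ =>
      measurable_sum_range_of_measurable_index (by fun_prop) (hΘmeas p))
  rw [integral_eq_lintegral_of_nonneg_ae (ae_of_all _ fun _ => (Real.exp_pos _).le)
      (Real.measurable_exp.comp (hCm.const_mul _)).aestronglyMeasurable,
    integral_eq_lintegral_of_nonneg_ae (ae_of_all _ fun _ => (Real.exp_pos _).le) (by fun_prop),
    hlintegral, ← hSlaw, lintegral_map (by fun_prop) hS]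

/-- The probabilistic core of Theorem 5.2 of the paper (cycle-time LST for an
exhaustively served queue): the pair `(S, N)` has law `ν ⊗ κ` with `κ` the
product-Poisson kernel with means `λ_p s_p`; `(Θ p k)` is an i.i.d. family of
nonnegative random variables with LST `π`, independent of `(S, N)`; and
`C = ∑ p, S_p + ∑ p, ∑_{k < N_p} Θ p k`. Then for every `ω ≥ 0`,
`E[e^{-ωC}] = E[exp (-∑ p, (ω + λ_p (1 - π(ω))) S_p)]`. -/
theorem stmt7 {Ω : Type*} [MeasurableSpace Ω] (μ : Measure Ω) [IsProbabilityMeasure μ]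
    (n : ℕ) (hn : 0 < n) (lam : Fin n → ℝ) (hlam : ∀ p, 0 < lam p)
    (ν : Measure (Fin n → ℝ)) [IsProbabilityMeasure ν]
    (hνsupp : ∀ᵐ s ∂ν, ∀ p, 0 ≤ s p)
    (S : Ω → Fin n → ℝ) (N : Ω → Fin n → ℕ) (hS : Measurable S) (hN : Measurable N)
    (hSlaw : Measure.map S μ = ν)
    (hjoint : ∀ A : Set (Fin n → ℝ), MeasurableSet A → ∀ f : Fin n → ℕ,
      μ (S ⁻¹' A ∩ {x | N x = f})
        = ∫⁻ s in A, ENNReal.ofReal (∏ p, poissonPdf (lam p * s p) (f p)) ∂ν)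
    (Θ : Fin n → ℕ → Ω → ℝ) (hΘmeas : ∀ p k, Measurable (Θ p k))
    (hΘ0 : ∀ p k, ∀ᵐ x ∂μ, 0 ≤ Θ p k x)
    (hiid : iIndepFun (fun pk : Fin n × ℕ => Θ pk.1 pk.2) μ)
    (hident : ∀ p k, Measure.map (Θ p k) μ = Measure.map (Θ ⟨0, hn⟩ 0) μ)
    (hindep : IndepFun (fun x => (S x, N x))
      (fun x (pk : Fin n × ℕ) => Θ pk.1 pk.2 x) μ)
    (π : ℝ → ℝ) (hπ : ∀ ω : ℝ, π ω = ∫ x, Real.exp (-ω * Θ ⟨0, hn⟩ 0 x) ∂μ)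
    (C : Ω → ℝ)
    (hC : ∀ x, C x = ∑ p, S x p + ∑ p, ∑ k ∈ Finset.range (N x p), Θ p k x)
    (ω : ℝ) (hω : 0 ≤ ω) :
    ∫ x, Real.exp (-ω * C x) ∂μ
      = ∫ x, Real.exp (-∑ p, (ω + lam p * (1 - π ω)) * S x p) ∂μ :=
  stmt7_general μ n hn lam hlam ν hνsupp S N hS hN hSlaw hjoint Θ hΘmeas hΘ0 hiid hident hindep π hπ
    C hC ω hω
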